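/- Let E be a finite-dimensional complex vector space and T : E → E a linear endomorphism. Set F := range(T − id_E). Then F is T-invariant, and dim Z(T) − dim Z(T|_F) = (dim ker(T − id_E))² = (dim E − dim F)², where T|_F is the restriction of T to F viewed as an endomorphism of F. -/

import Mathlib

/-!
Centralizers of `T` and of `N := T - 1` coincide, so it suffices to compare `Z(N)` with `Z(N|_F)`
for `F = range N`. Restriction to `F` maps `Z(N)` onto `Z(N|_F)`: a `B` commuting with `N|_F`
extends by `B` on `F` and by `s ∘ B ∘ N` on a complement of `F`, where `s` is a section of
`N : V → F`. Its kernel consists of the maps vanishing on `F` with values in `ker N`, i.e.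
`Hom(V/F, ker N)`, which has dimension `(dim ker N)²` because `dim V/F = dim ker N`.
-/

open Module LinearMap Submodule

namespace Subalgebra

variable {R A : Type*} [CommSemiring R] [Ring A] [Algebra R A]

theorem mem_centralizer_singleton_iff {a z : A} : z ∈ centralizer R {a} ↔ Commute a z := by
  simp [mem_centralizer_iff, Commute, SemiconjBy]

theorem centralizer_singleton_sub_one (a : A) : centralizer R {a - 1} = centralizer R {a} := by
  ext z
  simp only [mem_centralizer_singleton_iff]
  exact ⟨fun h => by simpa using h.add_left (Commute.one_left z),
    fun h => h.sub_left (Commute.one_left z)⟩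

end Subalgebra

open Subalgebra

namespace Module.End

section CommRing

variable {R V : Type*} [CommRing R] [AddCommGroup V] [Module R V]

theorem mapsTo_range_of_commute {N A : Module.End R V} (h : Commute N A) :
    ∀ x ∈ range N, A x ∈ range N := by
  rintro _ ⟨y, rfl⟩
  exact ⟨A y, LinearMap.congr_fun h y⟩

variable (N : Module.End R V)

def restrictRange : Module.End R (range N) :=
  N.restrict (mapsTo_range_of_commute (Commute.refl N))

def centralizerRestrictRange : centralizer R {N} →ₗ[R] centralizer R {N.restrictRange} where
  toFun A := ⟨A.1.restrict (mapsTo_range_of_commute (mem_centralizer_singleton_iff.1 A.2)),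
    mem_centralizer_singleton_iff.2 (restrict_commute (mem_centralizer_singleton_iff.1 A.2) _ _)⟩
  map_add' _ _ := rfl
  map_smul' _ _ := rfl

def centralizerOfQuotRangeToKer : ((V ⧸ range N) →ₗ[R] ker N) →ₗ[R] centralizer R {N} where
  toFun g := ⟨(ker N).subtype ∘ₗ g ∘ₗ (range N).mkQ, mem_centralizer_singleton_iff.2 <|
    LinearMap.ext fun x => by
      simp [(Submodule.Quotient.mk_eq_zero _).2 (mem_range_self N x)]⟩
  map_add' _ _ := rfl
  map_smul' _ _ := rfl

theorem centralizerOfQuotRangeToKer_injective :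
    Function.Injective (centralizerOfQuotRangeToKer N) := by
  intro g g' h
  ext x
  exact LinearMap.congr_fun (congrArg Subtype.val h) x

theorem ker_centralizerRestrictRange :
    ker (centralizerRestrictRange N) = range (centralizerOfQuotRangeToKer N) := by
  ext A
  constructor
  · intro hA0
    have hAF : ∀ x ∈ range N, A.1 x = 0 := fun x hx =>
      congrArg Subtype.val (LinearMap.congr_fun (congrArg Subtype.val hA0) ⟨x, hx⟩)
    have hAK : ∀ x, A.1 x ∈ ker N := fun x => by
      rw [LinearMap.mem_ker, ← Module.End.mul_apply, mem_centralizer_singleton_iff.1 A.2,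
        Module.End.mul_apply]
      exact hAF _ (mem_range_self N x)
    exact ⟨(range N).liftQ (A.1.codRestrict (ker N) hAK) fun x hx => Subtype.ext (hAF x hx),
      rfl⟩
  · rintro ⟨g, rfl⟩
    refine Subtype.ext <| LinearMap.ext fun ⟨x, hx⟩ => Subtype.ext ?_
    show ((g ((range N).mkQ x) : ker N) : V) = 0
    rw [mkQ_apply, (Submodule.Quotient.mk_eq_zero _).2 hx, map_zero, ZeroMemClass.coe_zero]

end CommRing

section Field

variable {K V : Type*} [Field K] [AddCommGroup V] [Module K V] (N : Module.End K V)

theorem centralizerRestrictRange_surjective :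
    Function.Surjective (centralizerRestrictRange N) := by
  rintro ⟨B, hB⟩
  have hNB := mem_centralizer_singleton_iff.1 hB
  obtain ⟨q, hq⟩ := (range N).exists_isCompl
  obtain ⟨s, hs⟩ := N.rangeRestrict.exists_rightInverse_of_surjective (range_rangeRestrict N)
  let A := ofIsCompl hq ((range N).subtype ∘ₗ B) (s ∘ₗ B ∘ₗ N.rangeRestrict ∘ₗ q.subtype)
  have hAN : A * N = (range N).subtype ∘ₗ B ∘ₗ N.rangeRestrict := by
    ext x
    exact ofIsCompl_apply_left hq (N.rangeRestrict x)
  have hNA : N * A = (range N).subtype ∘ₗ B ∘ₗ N.rangeRestrict := by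
    refine ext_on_codisjoint hq.codisjoint (fun x hx => ?_) (fun x hx => ?_)
    · have hAx : A x = B ⟨x, hx⟩ := ofIsCompl_apply_left hq ⟨x, hx⟩
      show N (A x) = (B (N.rangeRestrict x) : V)
      rw [hAx]
      exact congrArg Subtype.val (LinearMap.congr_fun hNB ⟨x, hx⟩)
    · have hAx : A x = s (B (N.rangeRestrict x)) := ofIsCompl_apply_right hq ⟨x, hx⟩
      show N (A x) = (B (N.rangeRestrict x) : V)
      rw [hAx]
      exact congrArg Subtype.val (LinearMap.congr_fun hs _)
  refine ⟨⟨A, mem_centralizer_singleton_iff.2 (hNA.trans hAN.symm)⟩, ?_⟩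
  exact Subtype.ext <| LinearMap.ext fun x => Subtype.ext <| ofIsCompl_apply_left hq x

variable [FiniteDimensional K V]

theorem finrank_centralizer_eq_finrank_centralizer_restrictRange_add :
    finrank K (centralizer K {N}) = finrank K (centralizer K {N.restrictRange}) +
      finrank K (V ⧸ range N) * finrank K (ker N) := by
  -- The named arguments make the centralizers' modules come from their `AddCommGroup` structure.
  rw [← finrank_range_add_finrank_ker (K := K) (V := centralizer K {N})
      (V₂ := centralizer K {N.restrictRange}) (centralizerRestrictRange N),
    range_eq_top.2 (centralizerRestrictRange_surjective N), finrank_top,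
    ker_centralizerRestrictRange, finrank_range_of_inj (centralizerOfQuotRangeToKer_injective N),
    finrank_linearMap]

theorem finrank_quotient_range_eq_finrank_ker : finrank K (V ⧸ range N) = finrank K (ker N) := by
  have := N.finrank_range_add_finrank_ker
  have := (range N).finrank_quotient_add_finrank
  omega

end Field

end Module.End

/-- Let `E` be a finite-dimensional complex vector space and
`T : E → E` a linear endomorphism, and set `F := range (T − id)`. Then `F` is
`T`-invariant and `dim Z(T) − dim Z(T|_F) = (dim ker (T − id))² = (dim E − dim F)²`,
where `Z(·)` denotes the centralizer and `T|_F` is the restriction of `T` to `F`. -/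
theorem centralizer_dim_monodromy_restrict
    (E : Type*) [AddCommGroup E] [Module ℂ E] [FiniteDimensional ℂ E]
    (T : Module.End ℂ E) :
    ∃ hT : ∀ x ∈ LinearMap.range (T - 1), T x ∈ LinearMap.range (T - 1),
      (Module.finrank ℂ
          (Subalgebra.centralizer ℂ ({T} : Set (Module.End ℂ E))) : ℤ)
        - (Module.finrank ℂ
          (Subalgebra.centralizer ℂ ({T.restrict hT} :
            Set (Module.End ℂ (LinearMap.range (T - 1))))) : ℤ)
        = (Module.finrank ℂ (LinearMap.ker (T - 1)) : ℤ) ^ 2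
      ∧ (Module.finrank ℂ (LinearMap.ker (T - 1)) : ℤ) ^ 2
        = ((Module.finrank ℂ E : ℤ)
            - (Module.finrank ℂ (LinearMap.range (T - 1)) : ℤ)) ^ 2 := by
  have hT : ∀ x ∈ range (T - 1), T x ∈ range (T - 1) :=
    Module.End.mapsTo_range_of_commute ((Commute.refl T).sub_left (Commute.one_left T))
  have hrestrict : (T - 1).restrictRange = T.restrict hT - 1 := rfl
  have hZ := (T - 1).finrank_centralizer_eq_finrank_centralizer_restrictRange_add
  rw [hrestrict, centralizer_singleton_sub_one, centralizer_singleton_sub_one,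
    Module.End.finrank_quotient_range_eq_finrank_ker] at hZ
  have hrank := (T - 1).finrank_range_add_finrank_ker
  refine ⟨hT, ?_, ?_⟩
  · rw [hZ]
    push_cast
    ring
  · rw [← hrank]
    push_cast
    ring
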